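/- arXiv:math/9901101 — 3 statements merged into one kernel-verified Lean document; each statement's English description precedes it below -/
import Mathlib

section
/- Let E be a row-finite directed graph, G a discrete group, c : E¹ → G a labeling, and {s_f, p_v} the canonical generators of C*(E). In C*(E) ⊗ K(ℓ²(G)), define t_(f,r) = s_f ⊗ λ_{c(f)} χ_r and q_(v,r) = p_v ⊗ χ_r, where λ is the left regular representation of G and χ_r is the rank-one-diagonal projection onto the span of the basis vector δ_r. Then {t_(f,r), q_(v,r)} is a Cuntz–Krieger (E ×_c G)-family: the q_(v,r) are mutually orthogonal projections, t_(f,r)* t_(f,r) = q_(r(f),r), and for each non-sink vertex (v,r), q_(v,r) = Σ_{s(f,t)=(v,r)} t_(f,t) t_(f,t)*. -/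
open scoped Classical
open scoped BigOperators

/-- Let `E` be a row-finite directed graph, `G` a discrete group,
`c : E¹ → G` a labeling, and `{s_f, p_v}` the canonical Cuntz–Krieger generators of
`C*(E)` (here: a Cuntz–Krieger `E`-family in a C*-algebra `A`).  In
`C*(E) ⊗ K(ℓ²(G))` — realized in a C*-algebra `B` containing a commuting copy
`ι : A → B` and a copy `κ` of the operators on `ℓ²(G)` (a Hilbert space `H` with
orthonormal basis `δ_s`, left translations `lam g` and coordinate projections `chi r`) —
define `t_(f,r) = ι(s_f) κ(λ_{c f} χ_r)` and `q_(v,r) = ι(p_v) κ(χ_r)`.  Then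
`{t_(f,r), q_(v,r)}` is a Cuntz–Krieger `(E ×_c G)`-family: the `q_(v,r)` are mutually
orthogonal projections, `t_(f,r)* t_(f,r) = q_(r f, r)`, and for each non-sink vertex
`(v,r)`, `q_(v,r) = Σ_{s(f,t)=(v,r)} t_(f,t) t_(f,t)*`. -/
theorem stmt6 {V Edge G : Type*} [Group G]
    {A : Type*} [NormedRing A] [StarRing A] [CStarRing A] [NormedAlgebra ℂ A]
      [CompleteSpace A] [StarModule ℂ A]
    {B : Type*} [NormedRing B] [StarRing B] [CStarRing B] [NormedAlgebra ℂ B]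
      [CompleteSpace B] [StarModule ℂ B]
    {H : Type*} [NormedAddCommGroup H] [InnerProductSpace ℂ H] [CompleteSpace H]
    (rE sE : Edge → V) (c : Edge → G)
    (hrowfin : ∀ v : V, {f : Edge | sE f = v}.Finite)
    (sfam : Edge → A) (pfam : V → A)
    (hproj : ∀ v, star (pfam v) = pfam v ∧ pfam v * pfam v = pfam v)
    (horth : ∀ v w, v ≠ w → pfam v * pfam w = 0)
    (hCK1 : ∀ f, star (sfam f) * sfam f = pfam (rE f))
    (hCK2 : ∀ v, (∃ f, sE f = v) →
      pfam v = ∑ᶠ f ∈ {f : Edge | sE f = v}, sfam f * star (sfam f))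
    -- ℓ²(G): an orthonormal basis `δ`, total in `H`
    (δ : G → H) (hON : Orthonormal ℂ δ)
    (htotal : (Submodule.span ℂ (Set.range δ)).topologicalClosure = ⊤)
    (lam : G → H →L[ℂ] H) (chi : G → H →L[ℂ] H)
    (hlam : ∀ g t, lam g (δ t) = δ (g * t))
    (hchi : ∀ r t, chi r (δ t) = if t = r then δ t else 0)
    (ι : A →⋆ₐ[ℂ] B) (κ : (H →L[ℂ] H) →⋆ₐ[ℂ] B)
    (hcomm : ∀ (a : A) (T : H →L[ℂ] H), ι a * κ T = κ T * ι a) :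
    let T : Edge × G → B := fun q => ι (sfam q.1) * κ (lam (c q.1) * chi q.2)
    let Q : V × G → B := fun p => ι (pfam p.1) * κ (chi p.2)
    (∀ p, star (Q p) = Q p ∧ Q p * Q p = Q p) ∧
    (∀ p p', p ≠ p' → Q p * Q p' = 0) ∧
    (∀ q : Edge × G, star (T q) * T q = Q (rE q.1, q.2)) ∧
    (∀ (v : V) (r : G), (∃ q : Edge × G, sE q.1 = v ∧ c q.1 * q.2 = r) →
      Q (v, r) = ∑ᶠ q ∈ {q : Edge × G | sE q.1 = v ∧ c q.1 * q.2 = r},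
        T q * star (T q)) := by
  intro T Q
  -- A vector orthogonal to every basis vector is zero.
  have hzero : ∀ v : H, (∀ s : G, (inner ℂ (δ s) v : ℂ) = 0) → v = 0 := by
    intro v hv
    have hmem : v ∈ (Submodule.span ℂ (Set.range δ))ᗮ := by
      rw [Submodule.mem_orthogonal]
      intro u hu
      induction hu using Submodule.span_induction with
      | mem x hx => obtain ⟨s, rfl⟩ := hx; exact hv s
      | zero => simp
      | add x y _ _ hx hy => rw [inner_add_left, hx, hy, add_zero]
      | smul a x _ hx => rw [inner_smul_left, hx, mul_zero]
    rw [Submodule.topologicalClosure_eq_top_iff.mp htotal] at hmem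
    simpa using hmem
  -- Continuous linear maps agreeing on the basis are equal.
  have hext : ∀ f g : H →L[ℂ] H, (∀ t, f (δ t) = g (δ t)) → f = g := by
    intro f g h
    have hd : Dense ((Submodule.span ℂ (Set.range δ)) : Set H) := by
      rw [← Submodule.dense_iff_topologicalClosure_eq_top] at htotal
      exact htotal
    refine ContinuousLinearMap.ext_on hd ?_
    rintro x ⟨t, rfl⟩
    exact h t
  have hONite : ∀ s t : G, (inner ℂ (δ s) (δ t) : ℂ) = if s = t then 1 else 0 :=
    fun s t => orthonormal_iff_ite.mp hON s t
  -- Adjoint computation from matrix coefficients.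
  have hadj : ∀ f g : H →L[ℂ] H,
      (∀ s t : G, (inner ℂ (f (δ s)) (δ t) : ℂ) = inner ℂ (δ s) (g (δ t))) → star f = g := by
    intro f g hfg
    refine hext _ _ fun t => ?_
    have : ∀ s : G, (inner ℂ (δ s) ((star f) (δ t) - g (δ t)) : ℂ) = 0 := by
      intro s
      rw [inner_sub_right, ContinuousLinearMap.star_eq_adjoint,
        ContinuousLinearMap.adjoint_inner_right, hfg s t, sub_self]
    have := hzero _ this
    exact sub_eq_zero.mp this
  -- `chi r` is self-adjoint.
  have hchi_star : ∀ r, star (chi r) = chi r := by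
    intro r
    refine hadj _ _ fun s t => ?_
    rw [hchi, hchi]
    by_cases hs : s = r <;> by_cases ht : t = r
    · simp [hs, ht]
    · subst hs; simp [ht, hONite, Ne.symm ht]
    · subst ht; simp [hs, hONite, hs]
    · simp [hs, ht]
  -- `star (lam g) = lam g⁻¹`.
  have hlam_star : ∀ g : G, star (lam g) = lam g⁻¹ := by
    intro g
    refine hadj _ _ fun s t => ?_
    rw [hlam, hlam, hONite, hONite]
    congr 1
    simp [eq_comm (a := g * s), eq_inv_mul_iff_mul_eq]
  -- products of `chi`'s
  have hchi_mul_self : ∀ r, chi r * chi r = chi r := by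
    intro r
    refine hext _ _ fun t => ?_
    simp only [ContinuousLinearMap.mul_apply, hchi]
    by_cases ht : t = r <;> simp [ht, hchi]
  have hchi_mul_ne : ∀ r r', r ≠ r' → chi r * chi r' = 0 := by
    intro r r' h
    refine hext _ _ fun t => ?_
    simp only [ContinuousLinearMap.mul_apply, hchi]
    by_cases ht : t = r' <;> simp [ht, hchi, Ne.symm h]
  -- `lam g⁻¹ * lam g = 1`
  have hlam_inv : ∀ g : G, lam g⁻¹ * lam g = 1 := by
    intro g
    refine hext _ _ fun t => ?_
    simp [ContinuousLinearMap.mul_apply, hlam]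
  -- conjugation: `lam g * chi t * lam g⁻¹ = chi (g * t)`
  have hconj : ∀ (g : G) (t : G), lam g * chi t * lam g⁻¹ = chi (g * t) := by
    intro g t
    refine hext _ _ fun s => ?_
    simp only [ContinuousLinearMap.mul_apply, hlam, hchi]
    by_cases hs : g⁻¹ * s = t
    · have : s = g * t := by rw [← hs]; group
      simp [hs, this, hlam]
    · have : ¬ s = g * t := by
        intro h; exact hs (by rw [h]; group)
      simp [hs, this]
  -- Key operator identities in B
  have hQ_eq : ∀ p : V × G, Q p = ι (pfam p.1) * κ (chi p.2) := fun _ => rfl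
  have hT_eq : ∀ q : Edge × G, T q = ι (sfam q.1) * κ (lam (c q.1) * chi q.2) := fun _ => rfl
  have hstarT : ∀ q : Edge × G,
      star (T q) = κ (chi q.2 * lam (c q.1)⁻¹) * ι (star (sfam q.1)) := by
    intro q
    rw [hT_eq, star_mul, ← map_star, ← map_star, star_mul, hchi_star, hlam_star]
  -- Q's are projections
  have hQproj : ∀ p, star (Q p) = Q p ∧ Q p * Q p = Q p := by
    intro p
    constructor
    · rw [hQ_eq, star_mul, ← map_star, ← map_star, hchi_star, (hproj p.1).1, hcomm]
    · rw [hQ_eq, mul_assoc, ← mul_assoc (κ (chi p.2)), ← hcomm, mul_assoc, ← map_mul,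
        hchi_mul_self, ← mul_assoc, ← map_mul, (hproj p.1).2]
  have hQorth : ∀ p p', p ≠ p' → Q p * Q p' = 0 := by
    rintro ⟨v, r⟩ ⟨v', r'⟩ hne
    rw [hQ_eq, hQ_eq, mul_assoc, ← mul_assoc (κ (chi r)), ← hcomm, mul_assoc, ← map_mul,
      ← mul_assoc, ← map_mul]
    by_cases hv : v = v'
    · have hr : r ≠ r' := by rintro rfl; exact hne (by rw [hv])
      rw [hchi_mul_ne r r' hr, map_zero, mul_zero]
    · rw [horth v v' hv, map_zero, zero_mul]
  have hTT : ∀ q : Edge × G, star (T q) * T q = Q (rE q.1, q.2) := by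
    rintro ⟨f, t⟩
    rw [hstarT, hT_eq]
    simp only
    rw [mul_assoc, ← mul_assoc (ι (star (sfam f))), ← map_mul, hCK1, hcomm, ← mul_assoc,
      ← map_mul, ← hcomm, hQ_eq]
    congr 1
    rw [show chi t * lam (c f)⁻¹ * (lam (c f) * chi t) = chi t * (lam (c f)⁻¹ * lam (c f)) * chi t
      by simp only [mul_assoc], hlam_inv, mul_one, hchi_mul_self]
  have hTTstar : ∀ q : Edge × G,
      T q * star (T q) = ι (sfam q.1 * star (sfam q.1)) * κ (chi (c q.1 * q.2)) := by
    rintro ⟨f, t⟩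
    rw [hstarT, hT_eq]
    simp only
    rw [mul_assoc, ← mul_assoc (κ (lam (c f) * chi t)), ← map_mul, ← hcomm, ← mul_assoc,
      ← map_mul]
    congr 1
    rw [show lam (c f) * chi t * (chi t * lam (c f)⁻¹)
        = lam (c f) * (chi t * chi t) * lam (c f)⁻¹ by simp only [mul_assoc], hchi_mul_self,
      hconj]
  refine ⟨hQproj, hQorth, hTT, ?_⟩
  rintro v r ⟨⟨f0, t0⟩, hf0, hc0⟩
  have hS : {q : Edge × G | sE q.1 = v ∧ c q.1 * q.2 = r}
      = (fun f => (f, (c f)⁻¹ * r)) '' {f : Edge | sE f = v} := by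
    ext ⟨f, t⟩
    simp only [Set.mem_setOf_eq, Set.mem_image]
    constructor
    · rintro ⟨h1, h2⟩
      exact ⟨f, h1, by rw [← h2]; simp [Prod.ext_iff]⟩
    · rintro ⟨f', h1, h2⟩
      obtain ⟨rfl, rfl⟩ := Prod.mk.injEq .. ▸ h2
      exact ⟨h1, by group⟩
  have hinj : ({f : Edge | sE f = v}).InjOn (fun f => (f, (c f)⁻¹ * r)) := by
    intro a _ b _ hab
    exact (Prod.ext_iff.mp hab).1
  rw [hS, finsum_mem_image hinj]
  have hterm : ∀ f ∈ {f : Edge | sE f = v},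
      T (f, (c f)⁻¹ * r) * star (T (f, (c f)⁻¹ * r))
        = ι (sfam f * star (sfam f)) * κ (chi r) := by
    intro f _
    rw [hTTstar]
    simp only
    congr 2
    group
  rw [finsum_mem_congr rfl hterm]
  rw [finsum_mem_eq_finite_toFinset_sum _ (hrowfin v), ← Finset.sum_mul, ← map_sum]
  rw [hQ_eq]
  congr 2
  rw [hCK2 v ⟨f0, hf0⟩, finsum_mem_eq_finite_toFinset_sum _ (hrowfin v)]
end

section
/- Let Q be a groupoid, G a group, c : Q → G a groupoid homomorphism, H := (Q ×_c G) ⋊ G, with moment maps ρ(y,r) = (r(y), c(y)r, e) (for the left H-action on Q ×_c G) and σ(y,r) = s(y) (for the right Q-action (x,s)·y = (xy, c(y)⁻¹s) when σ(x,s) = r(y)). Then: (1) if ρ(x,s) = ρ(y,t) then there exists z ∈ Q with (x,s) = (y,t)·z; and (2) if σ(x,s) = σ(y,t) then there exists h ∈ H with (x,s) = h·(y,t). Consequently ρ induces a bijection of (Q ×_c G)/Q onto H⁰ and σ induces a bijection of H\(Q ×_c G) onto Q⁰. -/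
/-- A groupoid on a carrier `Γ`, presented by total operations: range and source maps
`rng, src : Γ → Γ` (landing in the units), a multiplication `mul x y` (only constrained
when the pair is composable, i.e. `src x = rng y`), and an inversion `inv`. -/
structure GroupoidStruct (Γ : Type*) where
  rng : Γ → Γ
  src : Γ → Γ
  mul : Γ → Γ → Γ
  inv : Γ → Γ
  mul_assoc' : ∀ x y z, src x = rng y → src y = rng z →
    mul (mul x y) z = mul x (mul y z)
  rng_comp : ∀ x y, src x = rng y → rng (mul x y) = rng x
  src_comp : ∀ x y, src x = rng y → src (mul x y) = src y
  rng_inv : ∀ x, rng (inv x) = src x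
  src_inv : ∀ x, src (inv x) = rng x
  mul_inv_self : ∀ x, mul x (inv x) = rng x
  inv_mul_self : ∀ x, mul (inv x) x = src x
  rng_mul_self : ∀ x, mul (rng x) x = x
  mul_src_self : ∀ x, mul x (src x) = x
  src_rng : ∀ x, src (rng x) = rng x
  rng_src : ∀ x, rng (src x) = src x

/-- Let `H := (Q ×_c G) ⋊ G` act on the left of `Q ×_c G` by
`(x,s,t)·(y,r) = (xy, r*t⁻¹)` (defined when `s x = r y` and `s = c y * r`), with moment
map `ρ(y,r) = ((r y, c y * r), e)`, and let `Q` act on the right by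
`(x,s)·z = (xz, (c z)⁻¹ * s)` (defined when `s x = r z`), with moment map
`σ(y,r) = s y`.  Then: (1) `ρ p = ρ q` implies `p = q·z` for some `z ∈ Q`;
(2) `σ p = σ q` implies `p = h·q` for some `h ∈ H`; moreover `ρ` and `σ` are constant on
the respective orbits and have ranges `H⁰` and `Q⁰`, so `ρ` induces a bijection of
`(Q ×_c G)/Q` onto `H⁰` and `σ` a bijection of `H\(Q ×_c G)` onto `Q⁰`. -/
theorem stmt14 {Γ G : Type*} [Group G] (Q : GroupoidStruct Γ) (c : Γ → G)
    (hc : ∀ x y, Q.src x = Q.rng y → c (Q.mul x y) = c x * c y) :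
    let ρ : Γ × G → (Γ × G) × G := fun p => ((Q.rng p.1, c p.1 * p.2), 1)
    let σ : Γ × G → Γ := fun p => Q.src p.1
    -- (1)
    (∀ p q : Γ × G, ρ p = ρ q →
      ∃ z : Γ, Q.src q.1 = Q.rng z ∧ p = (Q.mul q.1 z, (c z)⁻¹ * q.2)) ∧
    -- (2)
    (∀ p q : Γ × G, σ p = σ q →
      ∃ (x : Γ) (s t : G), Q.src x = Q.rng q.1 ∧ s = c q.1 * q.2 ∧
        p = (Q.mul x q.1, q.2 * t⁻¹)) ∧
    -- ρ is constant on right `Q`-orbits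
    (∀ (p : Γ × G) (z : Γ), Q.src p.1 = Q.rng z →
      ρ (Q.mul p.1 z, (c z)⁻¹ * p.2) = ρ p) ∧
    -- σ is constant on left `H`-orbits
    (∀ (x : Γ) (s t : G) (y : Γ) (r : G), Q.src x = Q.rng y → s = c y * r →
      σ (Q.mul x y, r * t⁻¹) = σ (y, r)) ∧
    -- ρ maps onto the unit space of `H`
    (Set.range ρ = {h : (Γ × G) × G | Q.rng h.1.1 = h.1.1 ∧ h.2 = 1}) ∧
    -- σ maps onto the unit space of `Q`
    (Set.range σ = {u : Γ | Q.rng u = u}) := by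
  intro ρ σ
  have hcu : ∀ x, c (Q.rng x) = 1 := by
    intro x
    have h := hc (Q.rng x) x (Q.src_rng x)
    rw [Q.rng_mul_self] at h
    exact mul_right_cancel (b := c x)
      (show c (Q.rng x) * c x = 1 * c x by rw [← h, one_mul])
  have hcinv : ∀ x, c (Q.inv x) = (c x)⁻¹ := by
    intro x
    have h := hc x (Q.inv x) (Q.rng_inv x).symm
    rw [Q.mul_inv_self, hcu] at h
    exact (eq_inv_of_mul_eq_one_right h.symm)
  have hrr : ∀ x, Q.rng (Q.rng x) = Q.rng x := by
    intro x
    have := Q.rng_comp x (Q.inv x) (Q.rng_inv x).symm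
    rwa [Q.mul_inv_self] at this
  refine ⟨?_, ?_, ?_, ?_, ?_, ?_⟩
  · intro p q hpq
    have h1 : Q.rng p.1 = Q.rng q.1 := congrArg (fun h => h.1.1) hpq
    have h2 : c p.1 * p.2 = c q.1 * q.2 := congrArg (fun h => h.1.2) hpq
    refine ⟨Q.mul (Q.inv q.1) p.1, ?_, ?_⟩
    · rw [Q.rng_comp _ _ (by rw [Q.src_inv, h1]), Q.rng_inv]
    · have hcz : c (Q.mul (Q.inv q.1) p.1) = (c q.1)⁻¹ * c p.1 := by
        rw [hc _ _ (by rw [Q.src_inv, h1]), hcinv]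
      have hmul : Q.mul q.1 (Q.mul (Q.inv q.1) p.1) = p.1 := by
        rw [← Q.mul_assoc' _ _ _ (Q.rng_inv q.1).symm (by rw [Q.src_inv, h1]),
          Q.mul_inv_self, ← h1, Q.rng_mul_self]
      exact Prod.ext (by simp [hmul])
        (by simp only [hcz]
            rw [mul_inv_rev, inv_inv, mul_assoc, ← h2, ← mul_assoc, inv_mul_cancel, one_mul])
  · intro p q hpq
    have h1 : Q.src p.1 = Q.src q.1 := hpq
    refine ⟨Q.mul p.1 (Q.inv q.1), c q.1 * q.2, p.2⁻¹ * q.2, ?_, rfl, ?_⟩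
    · rw [Q.src_comp _ _ (by rw [Q.rng_inv, h1]), Q.src_inv]
    · have hmul : Q.mul (Q.mul p.1 (Q.inv q.1)) q.1 = p.1 := by
        rw [Q.mul_assoc' _ _ _ (by rw [Q.rng_inv, h1]) (Q.src_inv q.1),
          Q.inv_mul_self, ← h1, Q.mul_src_self]
      exact Prod.ext (by simp [hmul]) (by simp)
  · intro p z hz
    have : c (Q.mul p.1 z) * ((c z)⁻¹ * p.2) = c p.1 * p.2 := by
      rw [hc _ _ hz, mul_assoc, ← mul_assoc (c z), mul_inv_cancel, one_mul]
    simp [ρ, Q.rng_comp _ _ hz, this]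
  · intro x s t y r hxy _
    simp [σ, Q.src_comp _ _ hxy]
  · ext h
    constructor
    · rintro ⟨p, rfl⟩
      exact ⟨hrr p.1, rfl⟩
    · rintro ⟨h1, h2⟩
      refine ⟨(h.1.1, (c h.1.1)⁻¹ * h.1.2), ?_⟩
      simp only [ρ, h1]
      rw [← mul_assoc, mul_inv_cancel, one_mul, ← h2]
  · ext u
    constructor
    · rintro ⟨p, rfl⟩
      exact Q.rng_src p.1
    · intro hu
      refine ⟨(u, 1), ?_⟩
      simp only [σ]
      rw [← hu]
      exact Q.src_rng u
end

section
/- Let G be a group acting freely on the left of a set X, and let π : X → X/G be the quotient map. Suppose additionally X is the edge-and-vertex data of a directed graph F on which G acts freely by graph automorphisms. Fix a set-theoretic section choosing for each vertex orbit a representative; then there is a function c : (F/G)¹ → G (a labeling of the quotient graph) and an isomorphism of directed graphs from F onto the skew product (F/G) ×_c G carrying the given G-action on F to the translation action t·(x, s) = (x, st⁻¹) on (F/G) ×_c G. -/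
section aux
variable {G X : Type*} [Group G] [MulAction G X]

private lemma aux_mk_smul (g : G) (x : X) :
    Quotient.mk (MulAction.orbitRel G X) (g • x) = Quotient.mk (MulAction.orbitRel G X) x :=
  Quotient.sound ⟨g, rfl⟩

private lemma aux_ex (x : X) :
    ∃ g : G, g • (Quotient.mk (MulAction.orbitRel G X) x).out = x := by
  obtain ⟨g, hg⟩ := Quotient.exact ((Quotient.mk (MulAction.orbitRel G X) x).out_eq)
  exact ⟨g⁻¹, by rw [← hg, inv_smul_smul]⟩

end aux

/-- Let a group `G` act freely on a directed graph `F` (vertices `V`,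
edges `Edge`, range `rF`, source `sF`) by graph automorphisms, and let `F/G` be the
quotient graph (vertex set `V/G`, edge set `Edge/G`, with induced range and source maps
`rQ`, `sQ`).  Then there is a labeling `c : (F/G)¹ → G` and an isomorphism of directed
graphs from `F` onto the skew product `(F/G) ×_c G` (which has range `(f,t) ↦ (rQ f, t)`
and source `(f,t) ↦ (sQ f, c f * t)`) carrying the given `G`-action on `F` to the
translation action `t·(x,s) = (x, s * t⁻¹)`. -/
theorem stmt19 {V Edge G : Type*} [Group G] [MulAction G V] [MulAction G Edge]
    (rF sF : Edge → V)
    (hr : ∀ (g : G) (f : Edge), rF (g • f) = g • rF f)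
    (hs : ∀ (g : G) (f : Edge), sF (g • f) = g • sF f)
    (freeV : ∀ (g : G) (v : V), g • v = v → g = 1)
    (freeE : ∀ (g : G) (f : Edge), g • f = f → g = 1)
    (rQ sQ : Quotient (MulAction.orbitRel G Edge) → Quotient (MulAction.orbitRel G V))
    (hrQ : ∀ f : Edge, rQ (Quotient.mk (MulAction.orbitRel G Edge) f) =
      Quotient.mk (MulAction.orbitRel G V) (rF f))
    (hsQ : ∀ f : Edge, sQ (Quotient.mk (MulAction.orbitRel G Edge) f) =
      Quotient.mk (MulAction.orbitRel G V) (sF f)) :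
    ∃ (c : Quotient (MulAction.orbitRel G Edge) → G)
      (φV : V ≃ Quotient (MulAction.orbitRel G V) × G)
      (φE : Edge ≃ Quotient (MulAction.orbitRel G Edge) × G),
      -- `φ` intertwines the range maps
      (∀ f : Edge, φV (rF f) = (rQ (φE f).1, (φE f).2)) ∧
      -- `φ` intertwines the source maps
      (∀ f : Edge, φV (sF f) = (sQ (φE f).1, c (φE f).1 * (φE f).2)) ∧
      -- `φ` is equivariant for the given action and right translation
      (∀ (t : G) (v : V), φV (t • v) = ((φV v).1, (φV v).2 * t⁻¹)) ∧
      (∀ (t : G) (f : Edge), φE (t • f) = ((φE f).1, (φE f).2 * t⁻¹)) := by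
  classical
  set mkV : V → Quotient (MulAction.orbitRel G V) :=
    Quotient.mk (MulAction.orbitRel G V) with hmkV
  set mkE : Edge → Quotient (MulAction.orbitRel G Edge) :=
    Quotient.mk (MulAction.orbitRel G Edge) with hmkE
  choose gV hgV using fun v : V => aux_ex (G := G) v
  choose gE hgE using fun f : Edge => aux_ex (G := G) f
  have uniqV : ∀ (g g' : G) (x : V), g • x = g' • x → g = g' := by
    intro g g' x h
    have h1 : (g'⁻¹ * g) • x = x := by rw [mul_smul, h, inv_smul_smul]
    have h2 := freeV _ _ h1
    rw [mul_eq_one_iff_eq_inv] at h2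
    exact (inv_injective h2).symm
  have uniqE : ∀ (g g' : G) (x : Edge), g • x = g' • x → g = g' := by
    intro g g' x h
    have h1 : (g'⁻¹ * g) • x = x := by rw [mul_smul, h, inv_smul_smul]
    have h2 := freeE _ _ h1
    rw [mul_eq_one_iff_eq_inv] at h2
    exact (inv_injective h2).symm
  have gV_eq : ∀ (v : V) (g : G) (q : Quotient (MulAction.orbitRel G V)),
      mkV v = q → g • q.out = v → gV v = g := by
    intro v g q hq hgq
    apply uniqV _ _ q.out
    rw [← hq] at hgq ⊢
    rw [hgV v, hgq]
  have gE_eq : ∀ (f : Edge) (g : G) (q : Quotient (MulAction.orbitRel G Edge)),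
      mkE f = q → g • q.out = f → gE f = g := by
    intro f g q hq hgq
    apply uniqE _ _ q.out
    rw [← hq] at hgq ⊢
    rw [hgE f, hgq]
  have gV_smul : ∀ (t : G) (v : V), gV (t • v) = t * gV v := by
    intro t v
    refine gV_eq _ _ (mkV v) (aux_mk_smul t v) ?_
    rw [mul_smul, hgV v]
  have gE_smul : ∀ (t : G) (f : Edge), gE (t • f) = t * gE f := by
    intro t f
    refine gE_eq _ _ (mkE f) (aux_mk_smul t f) ?_
    rw [mul_smul, hgE f]
  -- key facts about the range/source of a general edge
  have key_r : ∀ f : Edge, gV (rF f) = gE f * gV (rF (mkE f).out) ∧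
      mkV (rF f) = mkV (rF (mkE f).out) := by
    intro f
    have h1 : rF f = gE f • rF (mkE f).out := by
      conv_lhs => rw [← hgE f, hr]
    constructor
    · rw [h1, gV_smul]
    · rw [h1]; exact aux_mk_smul _ _
  have key_s : ∀ f : Edge, gV (sF f) = gE f * gV (sF (mkE f).out) ∧
      mkV (sF f) = mkV (sF (mkE f).out) := by
    intro f
    have h1 : sF f = gE f • sF (mkE f).out := by
      conv_lhs => rw [← hgE f, hs]
    constructor
    · rw [h1, gV_smul]
    · rw [h1]; exact aux_mk_smul _ _
  refine ⟨fun q => (gV (sF q.out))⁻¹ * gV (rF q.out),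
    ⟨fun v => (mkV v, (gV v)⁻¹), fun p => p.2⁻¹ • p.1.out, ?_, ?_⟩,
    ⟨fun f => (mkE f, (gV (rF (mkE f).out))⁻¹ * (gE f)⁻¹),
      fun p => ((gV (rF p.1.out)) * p.2)⁻¹ • p.1.out, ?_, ?_⟩, ?_, ?_, ?_, ?_⟩
  · intro v
    simp only [inv_inv]
    exact hgV v
  · rintro ⟨q, s⟩
    have h1 : mkV (s⁻¹ • q.out) = q := (aux_mk_smul _ _).trans q.out_eq
    have h2 : gV (s⁻¹ • q.out) = s⁻¹ := gV_eq _ _ q h1 rfl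
    simp only [h1, h2, inv_inv]
  · intro f
    have h1 : gV (rF (mkE f).out) * ((gV (rF (mkE f).out))⁻¹ * (gE f)⁻¹) = (gE f)⁻¹ := by
      group
    simp only [h1, inv_inv]
    exact hgE f
  · rintro ⟨q, s⟩
    have h1 : mkE ((gV (rF q.out) * s)⁻¹ • q.out) = q := (aux_mk_smul _ _).trans q.out_eq
    have h2 : gE ((gV (rF q.out) * s)⁻¹ • q.out) = (gV (rF q.out) * s)⁻¹ :=
      gE_eq _ _ q h1 rfl
    simp only [h1, h2]
    ext
    · rfl
    · simp only; group
  · intro f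
    obtain ⟨h1, h2⟩ := key_r f
    refine Prod.ext ?_ ?_
    · show mkV (rF f) = rQ (mkE f)
      rw [hrQ f]
    · show (gV (rF f))⁻¹ = (gV (rF (mkE f).out))⁻¹ * (gE f)⁻¹
      rw [h1]; group
  · intro f
    obtain ⟨h1, h2⟩ := key_s f
    refine Prod.ext ?_ ?_
    · show mkV (sF f) = sQ (mkE f)
      rw [hsQ f]
    · show (gV (sF f))⁻¹ =
        (gV (sF (mkE f).out))⁻¹ * gV (rF (mkE f).out) * ((gV (rF (mkE f).out))⁻¹ * (gE f)⁻¹)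
      rw [h1]; group
  · intro t v
    have h1 : mkV (t • v) = mkV v := aux_mk_smul t v
    refine Prod.ext h1 ?_
    show (gV (t • v))⁻¹ = (gV v)⁻¹ * t⁻¹
    rw [gV_smul]; group
  · intro t f
    have h1 : mkE (t • f) = mkE f := aux_mk_smul t f
    refine Prod.ext h1 ?_
    show (gV (rF (mkE (t • f)).out))⁻¹ * (gE (t • f))⁻¹ =
      (gV (rF (mkE f).out))⁻¹ * (gE f)⁻¹ * t⁻¹
    rw [h1, gE_smul]; group
end
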